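/- arXiv:2409.13432 — 2 statements merged into one kernel-verified Lean document; each statement's English description precedes it below -/
import Mathlib

section
/- Let {A_n} and {B_n} be sequences of Hermitian d_n×d_n matrices with d_n → ∞, such that {A_n} has eigenvalue distribution given by a bounded measurable function f on a set D of positive finite measure, the spectral norms of A_n are uniformly bounded, and rank(B_n - A_n)/d_n → 0 with ||B_n - A_n|| uniformly bounded. Then {B_n} has the same eigenvalue distribution f. -/
/-!
For Hermitian `A`, `B` with `‖A‖, ‖B‖ ≤ c`, the identity
`B ^ m - A ^ m = ∑ i < m, B ^ i (B - A) A ^ (m - 1 - i)` and `|tr (X E)| ≤ rank E ‖E‖ ‖X‖` give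
`|∑ λⱼ(B) ^ m - ∑ λⱼ(A) ^ m| ≤ m rank(B - A) ‖B - A‖ c ^ (m - 1)`. Since
`rank (Bₙ - Aₙ) / dₙ → 0`, the normalised moments, hence the averages of any polynomial, over
the spectra of `Aₙ` and `Bₙ` have the same limit. All spectra and the range of `f` lie in a fixed interval `[-M, M]`, on which
a continuous test function `F` is uniformly close to a polynomial `p`; cutting `p` off by a bump
function equal to `1` on `[-M, M]` yields an admissible test function for `{Aₙ}`, and an
`ε / 3` argument concludes.
-/

open Matrix Filter MeasureTheory

/-- `{A n}` is distributed, in the sense of the eigenvalues, as the function `f`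
over the set `D` (Weyl eigenvalue distribution). -/
def EigDistributed {d : ℕ → ℕ} (A : ∀ n, Matrix (Fin (d n)) (Fin (d n)) ℂ)
    (hA : ∀ n, (A n).IsHermitian) {k : ℕ} (D : Set (Fin k → ℝ))
    (f : (Fin k → ℝ) → ℝ) : Prop :=
  ∀ F : ℝ → ℝ, Continuous F → HasCompactSupport F →
    Tendsto (fun n => (1 / (d n : ℝ)) * ∑ j, F ((hA n).eigenvalues j)) atTop
      (nhds ((volume D).toReal⁻¹ * ∫ t in D, F (f t)))

open scoped Matrix.Norms.L2Operator Topology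
open Polynomial Set

theorem pow_sub_pow_eq_sum_pow_mul_sub_mul_pow {R : Type*} [Ring R] (a b : R) (m : ℕ) :
    b ^ m - a ^ m = ∑ i ∈ Finset.range m, b ^ i * (b - a) * a ^ (m - 1 - i) := by
  have htel := Finset.sum_range_sub (fun i => b ^ i * a ^ (m - i)) m
  simp only [Nat.sub_self, pow_zero, mul_one, Nat.sub_zero, one_mul] at htel
  rw [← htel]
  refine Finset.sum_congr rfl fun i hi => ?_
  obtain ⟨k, rfl⟩ : ∃ k, m = i + 1 + k := ⟨m - (i + 1), by rw [Finset.mem_range] at hi; omega⟩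
  rw [show i + 1 + k - i = k + 1 by omega, show i + 1 + k - 1 - i = k by omega,
    show i + 1 + k - (i + 1) = k by omega, pow_succ, pow_succ']
  noncomm_ring

namespace Matrix
variable {n : Type*} [Fintype n] [DecidableEq n]

theorem trace_unitary_mul_mul_star (U : unitaryGroup n ℂ) (X : Matrix n n ℂ) :
    ((U : Matrix n n ℂ) * X * (star U : unitaryGroup n ℂ)).trace = X.trace := by
  rw [trace_mul_cycle, Unitary.coe_star, Unitary.coe_star_mul_self, one_mul]

theorem norm_unitary_mul_mul_star (U : unitaryGroup n ℂ) (X : Matrix n n ℂ) :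
    ‖(U : Matrix n n ℂ) * X * (star U : unitaryGroup n ℂ)‖ = ‖X‖ := by
  rw [mul_assoc, CStarRing.norm_coe_unitary_mul, CStarRing.norm_mul_coe_unitary]

theorem norm_apply_self_le_l2_opNorm (M : Matrix n n ℂ) (j : n) : ‖M j j‖ ≤ ‖M‖ := by
  let x : EuclideanSpace ℂ n := EuclideanSpace.single j 1
  have hM : M j j = inner ℂ x (toEuclideanCLM (𝕜 := ℂ) M x) := by
    simp [x, EuclideanSpace.inner_single_left, mulVec_single]
  calc ‖M j j‖ ≤ ‖x‖ * ‖toEuclideanCLM (𝕜 := ℂ) M x‖ := hM ▸ norm_inner_le_norm _ _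
    _ ≤ ‖M‖ := by simpa [x, cstar_norm_def] using (toEuclideanCLM (𝕜 := ℂ) M).le_opNorm x

theorem l2_opNorm_pow_le (M : Matrix n n ℂ) (k : ℕ) : ‖M ^ k‖ ≤ ‖M‖ ^ k := by
  rcases Nat.eq_zero_or_pos k with rfl | hk
  · rw [pow_zero, pow_zero, ← diagonal_one, l2_opNorm_diagonal]
    exact (pi_norm_le_iff_of_nonneg zero_le_one).2 fun _ => norm_one.le
  · exact norm_pow_le' M hk

namespace IsHermitian
variable {A : Matrix n n ℂ} (hA : A.IsHermitian)
include hA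

theorem l2_opNorm_eq : ‖A‖ = ‖hA.eigenvalues‖ := by
  conv_lhs => rw [hA.spectral_theorem, Unitary.conjStarAlgAut_apply, ← Unitary.coe_star]
  rw [norm_unitary_mul_mul_star, l2_opNorm_diagonal]
  simp [Pi.norm_def, Function.comp_def]

theorem trace_pow (m : ℕ) : (A ^ m).trace = ∑ j, (hA.eigenvalues j : ℂ) ^ m := by
  conv_lhs => rw [hA.spectral_theorem, ← map_pow, Unitary.conjStarAlgAut_apply,
    ← Unitary.coe_star, trace_unitary_mul_mul_star, diagonal_pow, trace_diagonal]
  rfl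

theorem abs_eigenvalues_le (j : n) : |hA.eigenvalues j| ≤ ‖A‖ :=
  hA.l2_opNorm_eq ▸ norm_le_pi_norm hA.eigenvalues j

theorem l2_opNorm_le_max {C : ℝ} (h : ∀ j, |hA.eigenvalues j| ≤ C) : ‖A‖ ≤ max C 0 :=
  hA.l2_opNorm_eq ▸
    (pi_norm_le_iff_of_nonneg (le_max_right C 0)).2 fun j => (h j).trans (le_max_left _ _)

theorem norm_trace_mul_le (M : Matrix n n ℂ) : ‖(M * A).trace‖ ≤ A.rank * ‖A‖ * ‖M‖ := by
  let U : Matrix n n ℂ := hA.eigenvectorUnitary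
  let N : Matrix n n ℂ := star U * M * U
  have htrace : (M * A).trace = ∑ j, N j j * hA.eigenvalues j := by
    conv_lhs => rw [hA.spectral_theorem, Unitary.conjStarAlgAut_apply]
    rw [← mul_assoc, ← mul_assoc, trace_mul_comm, ← mul_assoc, ← mul_assoc]
    simp [trace, mul_diagonal, N, U]
  have hN : ‖N‖ = ‖M‖ := by
    have := norm_unitary_mul_mul_star (star hA.eigenvectorUnitary) M
    rwa [star_star, Unitary.coe_star] at this
  calc ‖(M * A).trace‖ ≤ ∑ j, ‖N j j * hA.eigenvalues j‖ := htrace ▸ norm_sum_le _ _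
    _ ≤ ∑ j, if hA.eigenvalues j = 0 then 0 else ‖A‖ * ‖M‖ := by
        refine Finset.sum_le_sum fun j _ => ?_
        split_ifs with h
        · simp [h]
        · rw [norm_mul, Complex.norm_real, Real.norm_eq_abs, mul_comm]
          exact mul_le_mul (hA.abs_eigenvalues_le j) (hN ▸ norm_apply_self_le_l2_opNorm N j)
            (norm_nonneg _) (norm_nonneg _)
    _ = A.rank * ‖A‖ * ‖M‖ := by
        rw [Finset.sum_ite, Finset.sum_const_zero, zero_add, Finset.sum_const, nsmul_eq_mul,
          hA.rank_eq_card_non_zero_eigs, Fintype.card_subtype, mul_assoc]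

end IsHermitian

theorem IsHermitian.abs_sum_eigenvalues_pow_sub_le {A B : Matrix n n ℂ} (hA : A.IsHermitian)
    (hB : B.IsHermitian) {c : ℝ} (hAc : ‖A‖ ≤ c) (hBc : ‖B‖ ≤ c) (m : ℕ) :
    |∑ j, hB.eigenvalues j ^ m - ∑ j, hA.eigenvalues j ^ m| ≤
      m * (B - A).rank * ‖B - A‖ * c ^ (m - 1) := by
  have hc : 0 ≤ c := (norm_nonneg A).trans hAc
  have hterm : ∀ i ∈ Finset.range m, ‖(B ^ i * (B - A) * A ^ (m - 1 - i)).trace‖ ≤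
      (B - A).rank * ‖B - A‖ * c ^ (m - 1) := fun i hi => by
    rw [trace_mul_cycle]
    refine ((hB.sub hA).norm_trace_mul_le _).trans
      (mul_le_mul_of_nonneg_left ?_ (by positivity))
    calc ‖A ^ (m - 1 - i) * B ^ i‖ ≤ ‖A‖ ^ (m - 1 - i) * ‖B‖ ^ i :=
          (norm_mul_le _ _).trans (mul_le_mul (l2_opNorm_pow_le A _) (l2_opNorm_pow_le B _)
            (norm_nonneg _) (by positivity))
      _ ≤ c ^ (m - 1 - i) * c ^ i := by gcongr
      _ = c ^ (m - 1) := by rw [← pow_add]; congr 1; rw [Finset.mem_range] at hi; omega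
  have htrace : ((∑ j, hB.eigenvalues j ^ m - ∑ j, hA.eigenvalues j ^ m : ℝ) : ℂ) =
      (B ^ m - A ^ m).trace := by
    push_cast
    rw [trace_sub, hA.trace_pow, hB.trace_pow]
  rw [← Real.norm_eq_abs, ← Complex.norm_real, htrace, pow_sub_pow_eq_sum_pow_mul_sub_mul_pow,
    trace_sum]
  refine (norm_sum_le _ _).trans ((Finset.sum_le_sum hterm).trans_eq ?_)
  rw [Finset.sum_const, Finset.card_range, nsmul_eq_mul, mul_assoc, mul_assoc, mul_assoc]

end Matrix

section SpectralAverages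

variable {ι : Type*} {l : Filter ι} {d : ι → ℕ} {A B : ∀ i, Matrix (Fin (d i)) (Fin (d i)) ℂ}
  (hA : ∀ i, (A i).IsHermitian) (hB : ∀ i, (B i).IsHermitian) {c e : ℝ}

include hA hB in
theorem tendsto_inv_mul_sum_eigenvalues_pow_sub (hAc : ∀ i, ‖A i‖ ≤ c) (hBc : ∀ i, ‖B i‖ ≤ c)
    (he : ∀ i, ‖B i - A i‖ ≤ e)
    (hrank : Tendsto (fun i => ((B i - A i).rank : ℝ) / d i) l (𝓝 0)) (m : ℕ) :
    Tendsto (fun i => 1 / (d i : ℝ) *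
      (∑ j, (hB i).eigenvalues j ^ m - ∑ j, (hA i).eigenvalues j ^ m)) l (𝓝 0) := by
  refine squeeze_zero_norm (a := fun i => m * e * c ^ (m - 1) * (((B i - A i).rank : ℝ) / d i))
    (fun i => ?_) (by simpa using hrank.const_mul (m * e * c ^ (m - 1)))
  have hc : 0 ≤ c := (norm_nonneg _).trans (hAc i)
  rw [norm_mul, Real.norm_eq_abs, Real.norm_eq_abs, abs_of_nonneg (by positivity)]
  calc 1 / (d i : ℝ) * |∑ j, (hB i).eigenvalues j ^ m - ∑ j, (hA i).eigenvalues j ^ m|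
      ≤ 1 / (d i : ℝ) * (m * (B i - A i).rank * e * c ^ (m - 1)) := by
        gcongr
        exact ((hA i).abs_sum_eigenvalues_pow_sub_le (hB i) (hAc i) (hBc i) m).trans
          (by gcongr; exact he i)
    _ = m * e * c ^ (m - 1) * (((B i - A i).rank : ℝ) / d i) := by ring

include hA hB in
theorem tendsto_inv_mul_sum_eval_eigenvalues_sub (hAc : ∀ i, ‖A i‖ ≤ c) (hBc : ∀ i, ‖B i‖ ≤ c)
    (he : ∀ i, ‖B i - A i‖ ≤ e)
    (hrank : Tendsto (fun i => ((B i - A i).rank : ℝ) / d i) l (𝓝 0)) (p : ℝ[X]) :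
    Tendsto (fun i => 1 / (d i : ℝ) * ∑ j, p.eval ((hB i).eigenvalues j) -
      1 / (d i : ℝ) * ∑ j, p.eval ((hA i).eigenvalues j)) l (𝓝 0) := by
  have hexpand : ∀ i, 1 / (d i : ℝ) * ∑ j, p.eval ((hB i).eigenvalues j) -
      1 / (d i : ℝ) * ∑ j, p.eval ((hA i).eigenvalues j) =
        ∑ m ∈ Finset.range (p.natDegree + 1), p.coeff m *
          (1 / (d i : ℝ) * (∑ j, (hB i).eigenvalues j ^ m - ∑ j, (hA i).eigenvalues j ^ m)) := by
    intro i
    simp only [eval_eq_sum_range, ← mul_sub, Finset.mul_sum, ← Finset.sum_sub_distrib]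
    rw [Finset.sum_comm]
    refine Finset.sum_congr rfl fun m _ => Finset.sum_congr rfl fun j _ => by ring
  rw [funext hexpand]
  simpa using tendsto_finsetSum _ fun m _ =>
    (tendsto_inv_mul_sum_eigenvalues_pow_sub hA hB hAc hBc he hrank m).const_mul (p.coeff m)

end SpectralAverages

theorem tendsto_of_forall_dist_le {α ι : Type*} [PseudoMetricSpace α] {l : Filter ι}
    {u : ι → α} {L : α} (h : ∀ ε > 0, ∃ (v : ι → α) (L' : α), Tendsto v l (𝓝 L') ∧
      (∀ i, dist (u i) (v i) ≤ ε) ∧ dist L' L ≤ ε) :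
    Tendsto u l (𝓝 L) := by
  refine Metric.tendsto_nhds.2 fun ε hε => ?_
  obtain ⟨v, L', hv, huv, hL'⟩ := h (ε / 3) (by positivity)
  filter_upwards [Metric.tendsto_nhds.1 hv (ε / 3) (by positivity)] with i hi
  calc dist (u i) L ≤ dist (u i) (v i) + dist (v i) L' + dist L' L := dist_triangle4 _ _ _ _
    _ < ε := by linarith [huv i]

theorem exists_hasCompactSupport_eqOn_polynomial_near (F : ℝ → ℝ) (hF : Continuous F) (M : ℝ)
    {ε : ℝ} (hε : 0 < ε) : ∃ (p : ℝ[X]) (q : ℝ → ℝ), Continuous q ∧ HasCompactSupport q ∧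
      ∀ x ∈ Icc (-M) M, q x = p.eval x ∧ |q x - F x| < ε := by
  obtain ⟨p, hp⟩ := exists_polynomial_near_of_continuousOn (-M) M F hF.continuousOn ε hε
  let φ : ContDiffBump (0 : ℝ) := ⟨|M| + 1, |M| + 2, by positivity, by linarith⟩
  have hφ : ∀ x ∈ Icc (-M) M, φ x = 1 := fun x hx => φ.one_of_mem_closedBall <| by
    rw [Metric.mem_closedBall, dist_zero_right, Real.norm_eq_abs]
    linarith [abs_le.2 hx, le_abs_self M]
  refine ⟨p, fun x => p.eval x * φ x, p.continuous.mul φ.continuous,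
    φ.hasCompactSupport.mul_left, fun x hx => ?_⟩
  simpa [hφ x hx] using hp x hx

theorem abs_inv_mul_sum_sub_inv_mul_sum_le {d : ℕ} {a b : Fin d → ℝ} {ε : ℝ} (hε : 0 ≤ ε)
    (h : ∀ j, |a j - b j| ≤ ε) : |1 / (d : ℝ) * ∑ j, a j - 1 / (d : ℝ) * ∑ j, b j| ≤ ε := by
  rw [← mul_sub, ← Finset.sum_sub_distrib, abs_mul, abs_of_nonneg (by positivity)]
  calc 1 / (d : ℝ) * |∑ j, (a j - b j)| ≤ 1 / (d : ℝ) * (d * ε) := by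
        gcongr
        simpa using (Finset.abs_sum_le_sum_abs _ Finset.univ).trans
          (Finset.sum_le_card_nsmul _ _ _ fun j _ => h j)
    _ ≤ ε := by
        rcases Nat.eq_zero_or_pos d with rfl | hd
        · simpa using hε
        · field_simp; rfl

section SetIntegral

variable {α : Type*} [MeasurableSpace α] {μ : Measure α} {s : Set α} {g : α → ℝ} {K : Set ℝ}

theorem integrableOn_comp_of_mapsTo_isCompact (hs : μ s ≠ ⊤) (hg : Measurable g)
    (hK : IsCompact K) (hgK : ∀ x, g x ∈ K) {F : ℝ → ℝ} (hF : Continuous F) :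
    IntegrableOn (fun x => F (g x)) s μ := by
  obtain ⟨C, hC⟩ := hK.exists_bound_of_continuousOn hF.continuousOn
  exact IntegrableOn.of_bound hs.lt_top (hF.measurable.comp hg).aestronglyMeasurable C
    (ae_of_all _ fun x => hC _ (hgK x))

theorem abs_inv_mul_setIntegral_comp_sub_le (hs : μ s ≠ ⊤) (hg : Measurable g)
    (hK : IsCompact K) (hgK : ∀ x, g x ∈ K) {F G : ℝ → ℝ} (hF : Continuous F)
    (hG : Continuous G) {ε : ℝ} (hε : 0 ≤ ε) (hFG : ∀ y ∈ K, |F y - G y| ≤ ε) :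
    |(μ s).toReal⁻¹ * ∫ x in s, F (g x) ∂μ - (μ s).toReal⁻¹ * ∫ x in s, G (g x) ∂μ| ≤ ε := by
  rw [← mul_sub, ← integral_sub (integrableOn_comp_of_mapsTo_isCompact hs hg hK hgK hF)
    (integrableOn_comp_of_mapsTo_isCompact hs hg hK hgK hG), abs_mul, abs_inv,
    abs_of_nonneg ENNReal.toReal_nonneg]
  calc (μ s).toReal⁻¹ * |∫ x in s, (F (g x) - G (g x)) ∂μ|
      ≤ (μ s).toReal⁻¹ * (ε * (μ s).toReal) := by
        gcongr
        exact norm_setIntegral_le_of_norm_le_const (f := fun x => F (g x) - G (g x)) hs.lt_top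
          fun x _ => hFG _ (hgK x)
    _ ≤ ε := by
        rcases eq_or_ne (μ s).toReal 0 with h0 | h0
        · simpa [h0] using hε
        · rw [mul_comm ε, inv_mul_cancel_left₀ h0]

end SetIntegral

theorem eig_distribution_low_rank_perturbation_general (d : ℕ → ℕ)
    (A B : ∀ n, Matrix (Fin (d n)) (Fin (d n)) ℂ)
    (hA : ∀ n, (A n).IsHermitian) (hB : ∀ n, (B n).IsHermitian)
    {k : ℕ} (D : Set (Fin k → ℝ))
    (hDfin : volume D ≠ ⊤)
    (f : (Fin k → ℝ) → ℝ) (hfmeas : Measurable f) (hfbd : ∃ C, ∀ t, |f t| ≤ C)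
    (hdist : EigDistributed A hA D f)
    (hAbd : ∃ C, ∀ n j, |(hA n).eigenvalues j| ≤ C)
    (hrank : Tendsto (fun n => ((B n - A n).rank : ℝ) / (d n : ℝ)) atTop (nhds 0))
    (hdiffbd : ∃ C, ∀ n j, |((hB n).sub (hA n)).eigenvalues j| ≤ C) :
    EigDistributed B hB D f := by
  obtain ⟨CA, hCA⟩ := hAbd
  obtain ⟨CE, hCE⟩ := hdiffbd
  obtain ⟨Cf, hCf⟩ := hfbd
  set c := max CA 0 + max CE 0
  have hE : ∀ n, ‖B n - A n‖ ≤ max CE 0 := fun n => ((hB n).sub (hA n)).l2_opNorm_le_max (hCE n)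
  have hAc : ∀ n, ‖A n‖ ≤ c := fun n =>
    ((hA n).l2_opNorm_le_max (hCA n)).trans (le_add_of_nonneg_right (le_max_right _ _))
  have hBc : ∀ n, ‖B n‖ ≤ c := fun n => (norm_le_norm_add_norm_sub' _ (A n)).trans
    (add_le_add ((hA n).l2_opNorm_le_max (hCA n)) (hE n))
  set M := max c Cf
  have hspec : ∀ {n} {H : Matrix (Fin (d n)) (Fin (d n)) ℂ} (hH : H.IsHermitian), ‖H‖ ≤ c →
      ∀ j, hH.eigenvalues j ∈ Icc (-M) M := fun hH hHc j =>
    abs_le.1 <| (hH.abs_eigenvalues_le j).trans (hHc.trans (le_max_left _ _))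
  have hfM : ∀ t, f t ∈ Icc (-M) M := fun t => abs_le.1 <| (hCf t).trans (le_max_right _ _)
  intro F hF hFc
  refine tendsto_of_forall_dist_le fun ε hε => ?_
  obtain ⟨p, q, hq, hqc, hqp⟩ := exists_hasCompactSupport_eqOn_polynomial_near F hF M hε
  have hsum : ∀ {n} {H : Matrix (Fin (d n)) (Fin (d n)) ℂ} (hH : H.IsHermitian),
      ‖H‖ ≤ c → ∑ j, q (hH.eigenvalues j) = ∑ j, p.eval (hH.eigenvalues j) :=
    fun hH hHc => Finset.sum_congr rfl fun j _ => (hqp _ (hspec hH hHc j)).1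
  refine ⟨fun n => 1 / (d n : ℝ) * ∑ j, q ((hB n).eigenvalues j),
    (volume D).toReal⁻¹ * ∫ t in D, q (f t), ?_, fun n => ?_, ?_⟩
  · have := (hdist q hq hqc).add (tendsto_inv_mul_sum_eval_eigenvalues_sub hA hB hAc hBc hE hrank p)
    simpa [hsum (hA _) (hAc _), hsum (hB _) (hBc _)] using this
  · exact abs_inv_mul_sum_sub_inv_mul_sum_le hε.le fun j => by
      rw [abs_sub_comm]; exact (hqp _ (hspec (hB n) (hBc n) j)).2.le
  · exact abs_inv_mul_setIntegral_comp_sub_le hDfin hfmeas isCompact_Icc hfM hq hF hε.le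
      fun y hy => (hqp y hy).2.le

/-- Low-rank, uniformly bounded perturbations do not change the eigenvalue
distribution of a sequence of Hermitian matrices. -/
theorem eig_distribution_low_rank_perturbation (d : ℕ → ℕ)
    (hd : Tendsto d atTop atTop)
    (A B : ∀ n, Matrix (Fin (d n)) (Fin (d n)) ℂ)
    (hA : ∀ n, (A n).IsHermitian) (hB : ∀ n, (B n).IsHermitian)
    {k : ℕ} (D : Set (Fin k → ℝ)) (hD : MeasurableSet D)
    (hD0 : volume D ≠ 0) (hDfin : volume D ≠ ⊤)
    (f : (Fin k → ℝ) → ℝ) (hfmeas : Measurable f) (hfbd : ∃ C, ∀ t, |f t| ≤ C)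
    (hdist : EigDistributed A hA D f)
    (hAbd : ∃ C, ∀ n j, |(hA n).eigenvalues j| ≤ C)
    (hrank : Tendsto (fun n => ((B n - A n).rank : ℝ) / (d n : ℝ)) atTop (nhds 0))
    (hdiffbd : ∃ C, ∀ n j, |((hB n).sub (hA n)).eigenvalues j| ≤ C) :
    EigDistributed B hB D f :=
  eig_distribution_low_rank_perturbation_general d A B hA hB D hDfin f hfmeas hfbd hdist hAbd hrank
    hdiffbd
end

section
/- Let {A_n} be a sequence of Hermitian matrices of size d_n → ∞ whose eigenvalues satisfy: for each n, at most r_n eigenvalues are nonzero with r_n/d_n → 0, and all eigenvalues are bounded in absolute value by a constant C. Let {B_n} be Hermitian of size d_n distributed as (f,D). Then {A_n + B_n} is distributed as (f,D) in the sense of eigenvalues. -/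
open Matrix Filter MeasureTheory

open Finset Module Submodule Topology
open scoped InnerProductSpace

/-!
On the kernel of `A n` the matrices `A n + B n` and `B n` agree, so the span of the eigenvectors
of one of them with eigenvalue `> t`, that kernel, and the span of the eigenvectors of the other
with eigenvalue `≤ t` meet only in `0` (compare the quadratic forms). Counting dimensions, the
numbers of eigenvalues `> t` of `A n + B n` and of `B n` differ by at most `rank (A n) ≤ r n`,
for every `t`.

Replacing `F` by the step function `y ↦ F (δ * ⌈y / δ⌉)` costs at most `ε` per eigenvalue, and
turns `∑ j, F (λ j)` into a finite combination of these counting functions. Hence the normalized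
sums for `A n + B n` and `B n` differ by at most `ε + c * r n / d n`, which tends to `ε`.
-/

universe u

namespace OrthonormalBasis

variable {𝕜 E ι : Type*} [RCLike 𝕜] [NormedAddCommGroup E] [InnerProductSpace 𝕜 E] [Fintype ι]
  (b : OrthonormalBasis ι 𝕜 E)

theorem finrank_span_image (s : Finset ι) : finrank 𝕜 (span 𝕜 (b '' s)) = #s := by
  rw [Set.image_eq_range]
  exact (finrank_span_eq_card (b.orthonormal.linearIndependent.comp _ Subtype.val_injective)).trans
    (Fintype.card_coe s)

theorem inner_eq_zero_of_mem_span_image {s : Set ι} {x : E} (hx : x ∈ span 𝕜 (b '' s)) {i : ι}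
    (hi : i ∉ s) : ⟪b i, x⟫_𝕜 = 0 := by
  have hle : span 𝕜 (b '' s) ≤ LinearMap.ker (innerₛₗ 𝕜 (b i)) := span_le.mpr <| by
    rintro _ ⟨j, hj, rfl⟩
    exact b.orthonormal.inner_eq_zero (by rintro rfl; exact hi hj)
  exact hle hx

variable {T : E →ₗ[𝕜] E} {μ : ι → ℝ}

theorem re_inner_apply_self_eq_sum (hb : ∀ i, T (b i) = (μ i : 𝕜) • b i) (x : E) :
    RCLike.re ⟪x, T x⟫_𝕜 = ∑ i, μ i * ‖⟪b i, x⟫_𝕜‖ ^ 2 := by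
  conv_lhs => rw [← b.sum_repr' x]
  simp only [map_sum, map_smul, hb, smul_smul, inner_sum, inner_smul_right,
    b.orthonormal.inner_left_fintype]
  refine sum_congr rfl fun i _ => ?_
  rw [mul_right_comm, RCLike.mul_conj, ← RCLike.ofReal_pow, ← RCLike.ofReal_mul, RCLike.ofReal_re,
    mul_comm]

theorem lt_re_inner_apply_self (hb : ∀ i, T (b i) = (μ i : 𝕜) • b i) {t : ℝ} {s : Set ι}
    (hs : ∀ i ∈ s, t < μ i) {x : E} (hx : x ∈ span 𝕜 (b '' s)) (hx0 : x ≠ 0) :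
    t * ‖x‖ ^ 2 < RCLike.re ⟪x, T x⟫_𝕜 := by
  have hzero : ∀ i ∉ s, ⟪b i, x⟫_𝕜 = 0 := fun i hi => b.inner_eq_zero_of_mem_span_image hx hi
  obtain ⟨i₀, hi₀⟩ : ∃ i, ⟪b i, x⟫_𝕜 ≠ 0 := by
    by_contra! h
    exact hx0 (by rw [← b.sum_repr' x]; simp [h])
  have hi₀s : i₀ ∈ s := by_contra fun h => hi₀ (hzero _ h)
  rw [b.re_inner_apply_self_eq_sum hb, ← b.sum_sq_norm_inner_right, mul_sum]
  refine sum_lt_sum (fun i _ => ?_) ⟨i₀, mem_univ _, ?_⟩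
  · by_cases hi : i ∈ s
    · exact mul_le_mul_of_nonneg_right (hs i hi).le (by positivity)
    · simp [hzero i hi]
  · exact mul_lt_mul_of_pos_right (hs i₀ hi₀s) (by positivity)

theorem re_inner_apply_self_le (hb : ∀ i, T (b i) = (μ i : 𝕜) • b i) {t : ℝ} {s : Set ι}
    (hs : ∀ i ∈ s, μ i ≤ t) {x : E} (hx : x ∈ span 𝕜 (b '' s)) :
    RCLike.re ⟪x, T x⟫_𝕜 ≤ t * ‖x‖ ^ 2 := by
  rw [b.re_inner_apply_self_eq_sum hb, ← b.sum_sq_norm_inner_right, mul_sum]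
  refine sum_le_sum fun i _ => ?_
  by_cases hi : i ∈ s
  · exact mul_le_mul_of_nonneg_right (hs i hi) (by positivity)
  · simp [b.inner_eq_zero_of_mem_span_image hx hi]

end OrthonormalBasis

namespace Matrix

theorem rank_neg {R m n : Type*} [CommRing R] [Fintype n] (P : Matrix m n R) :
    (-P).rank = P.rank := by
  have : (-P).mulVecLin = -P.mulVecLin := by ext; simp
  rw [Matrix.rank, Matrix.rank, this, LinearMap.range_neg]

variable {𝕜 m n : Type*} [RCLike 𝕜] [Fintype n] [DecidableEq n]

theorem finrank_ker_toEuclideanLin_add_rank [Fintype m] (P : Matrix m n 𝕜) :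
    finrank 𝕜 (LinearMap.ker (toEuclideanLin P)) + P.rank = Fintype.card n := by
  rw [rank_eq_finrank_range_toLin P (PiLp.basisFun 2 𝕜 m) (PiLp.basisFun 2 𝕜 n),
    ← toLpLin_eq_toLin, add_comm, LinearMap.finrank_range_add_finrank_ker, finrank_euclideanSpace]

namespace IsHermitian

variable {A : Matrix n n 𝕜}

theorem toEuclideanLin_eigenvectorBasis (hA : A.IsHermitian) (i : n) :
    toEuclideanLin A (hA.eigenvectorBasis i) = (hA.eigenvalues i : 𝕜) • hA.eigenvectorBasis i := by
  apply WithLp.ofLp_injective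
  rw [ofLp_toLpLin, toLin'_apply, hA.mulVec_eigenvectorBasis i, WithLp.ofLp_smul,
    RCLike.real_smul_eq_coe_smul (K := 𝕜)]

theorem rank_eq_ncard_eigenvalues_ne_zero (hA : A.IsHermitian) :
    A.rank = {i | hA.eigenvalues i ≠ 0}.ncard := by
  rw [hA.rank_eq_card_non_zero_eigs, ← Nat.card_coe_set_eq, Nat.card_eq_fintype_card]
  rfl

theorem card_lt_eigenvalues_le_add_rank {M N : Matrix n n 𝕜} (hM : M.IsHermitian)
    (hN : N.IsHermitian) (t : ℝ) :
    #{i | t < hM.eigenvalues i} ≤ #{i | t < hN.eigenvalues i} + (M - N).rank := by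
  set U := span 𝕜 (hM.eigenvectorBasis '' ↑(filter (fun i => t < hM.eigenvalues i) univ))
  set V := span 𝕜 (hN.eigenvectorBasis '' ↑(filter (fun i => ¬t < hN.eigenvalues i) univ))
  set W := LinearMap.ker (toEuclideanLin (M - N))
  have hdisj : Disjoint (U ⊓ W) V := by
    refine disjoint_def.mpr fun x hxUW hxV => by_contra fun hx0 => ?_
    have hxU : x ∈ U := hxUW.1
    have hMN : toEuclideanLin M x = toEuclideanLin N x := by
      have hxW : x ∈ W := hxUW.2
      rwa [LinearMap.mem_ker, map_sub, LinearMap.sub_apply, sub_eq_zero] at hxW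
    have hlt := hM.eigenvectorBasis.lt_re_inner_apply_self hM.toEuclideanLin_eigenvectorBasis
      (fun i hi => by simpa using hi) hxU hx0
    have hle := hN.eigenvectorBasis.re_inner_apply_self_le hN.toEuclideanLin_eigenvectorBasis
      (fun i hi => by simpa using hi) hxV
    rw [hMN] at hlt
    linarith
  have hUW := finrank_sup_add_finrank_inf_eq U W
  have hsup := (U ⊔ W).finrank_le
  have hdim := finrank_add_finrank_le_of_disjoint hdisj
  have hU : finrank 𝕜 U = #{i | t < hM.eigenvalues i} := hM.eigenvectorBasis.finrank_span_image _
  have hV : finrank 𝕜 V = #{i | ¬t < hN.eigenvalues i} := hN.eigenvectorBasis.finrank_span_image _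
  have hW : finrank 𝕜 W + (M - N).rank = Fintype.card n :=
    finrank_ker_toEuclideanLin_add_rank (M - N)
  have hcard := card_filter_add_card_filter_not (s := univ) fun i => t < hN.eigenvalues i
  rw [finrank_euclideanSpace] at hsup hdim
  rw [card_univ] at hcard
  omega

end IsHermitian

end Matrix

section CountingFunction

variable {ι : Type*} [Fintype ι]

theorem sum_comp_eq_sum_mul_card_sub_card (μ : ι → ℤ) (G : ℤ → ℝ) (I : Finset ℤ)
    (hG : ∀ i ∉ I, G i = 0) :
    ∑ j, G (μ j) = ∑ i ∈ I, G i * ((#{j | i - 1 < μ j} : ℝ) - #{j | i < μ j}) := by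
  have hcell : ∀ m : ℤ, G m = ∑ i ∈ I, G i *
      ((if i - 1 < m then 1 else 0) - (if i < m then 1 else 0) : ℝ) := by
    intro m
    have hite : ∀ i, ((if i - 1 < m then 1 else 0) - (if i < m then 1 else 0) : ℝ)
        = if m = i then 1 else 0 := by
      intro i
      split_ifs <;> first | omega | norm_num
    simp only [hite, mul_ite, mul_one, mul_zero, sum_ite_eq]
    split_ifs with hm
    · rfl
    · exact hG m hm
  rw [sum_congr rfl fun j _ => hcell (μ j), sum_comm]
  simp only [natCast_card_filter, ← sum_sub_distrib, mul_sum]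

theorem abs_sum_comp_sub_sum_comp_le (μ ν : ι → ℤ) (r : ℕ)
    (hμν : ∀ i, #{j | i < μ j} ≤ #{j | i < ν j} + r)
    (hνμ : ∀ i, #{j | i < ν j} ≤ #{j | i < μ j} + r)
    (G : ℤ → ℝ) (I : Finset ℤ) (hG : ∀ i ∉ I, G i = 0) :
    |∑ j, G (μ j) - ∑ j, G (ν j)| ≤ 2 * r * ∑ i ∈ I, |G i| := by
  have hcount : ∀ i, |(#{j | i < μ j} : ℝ) - #{j | i < ν j}| ≤ r := by
    intro i
    have h₁ : (#{j | i < μ j} : ℝ) ≤ #{j | i < ν j} + r := by exact_mod_cast hμν i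
    have h₂ : (#{j | i < ν j} : ℝ) ≤ #{j | i < μ j} + r := by exact_mod_cast hνμ i
    exact abs_sub_le_iff.mpr ⟨by linarith, by linarith⟩
  rw [sum_comp_eq_sum_mul_card_sub_card μ G I hG, sum_comp_eq_sum_mul_card_sub_card ν G I hG,
    ← sum_sub_distrib, mul_sum]
  refine (abs_sum_le_sum_abs _ _).trans (sum_le_sum fun i _ => ?_)
  rw [← mul_sub, abs_mul, mul_comm]
  refine mul_le_mul_of_nonneg_right ?_ (abs_nonneg _)
  calc _ = |((#{j | i - 1 < μ j} : ℝ) - #{j | i - 1 < ν j})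
          - ((#{j | i < μ j} : ℝ) - #{j | i < ν j})| := by ring_nf
    _ ≤ _ := (abs_sub _ _).trans (by linarith [hcount (i - 1), hcount i])

theorem abs_sum_sub_sum_le_of_card_lt (μ ν : ι → ℝ) (r : ℕ)
    (hμν : ∀ t, #{j | t < μ j} ≤ #{j | t < ν j} + r)
    (hνμ : ∀ t, #{j | t < ν j} ≤ #{j | t < μ j} + r)
    (F : ℝ → ℝ) {δ ε : ℝ} (hδ : 0 < δ) (hF : ∀ y, |F y - F (δ * ⌈y / δ⌉)| ≤ ε)
    (I : Finset ℤ) (hI : ∀ i ∉ I, F (δ * i) = 0) :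
    |∑ j, F (μ j) - ∑ j, F (ν j)|
      ≤ 2 * ε * Fintype.card ι + 2 * r * ∑ i ∈ I, |F (δ * i)| := by
  have happrox : ∀ x : ι → ℝ, |∑ j, F (x j) - ∑ j, F (δ * ⌈x j / δ⌉)| ≤ ε * Fintype.card ι := by
    intro x
    rw [← sum_sub_distrib]
    refine (abs_sum_le_sum_abs _ _).trans ?_
    simpa [mul_comm] using sum_le_sum fun j (_ : j ∈ univ) => hF (x j)
  have hceil : ∀ (x : ι → ℝ) (i : ℤ), #{j | i < ⌈x j / δ⌉} = #{j | δ * i < x j} := by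
    intro x i
    simp only [Int.lt_ceil, lt_div_iff₀ hδ, mul_comm]
  have hstep := abs_sum_comp_sub_sum_comp_le (fun j => ⌈μ j / δ⌉) (fun j => ⌈ν j / δ⌉) r
    (fun i => by simp only [hceil]; exact hμν _) (fun i => by simp only [hceil]; exact hνμ _)
    (fun i => F (δ * i)) I hI
  have hμ := happrox μ
  have hν := happrox ν
  calc |∑ j, F (μ j) - ∑ j, F (ν j)|
      ≤ |∑ j, F (μ j) - ∑ j, F (δ * ⌈μ j / δ⌉)|
        + |∑ j, F (δ * ⌈μ j / δ⌉) - ∑ j, F (δ * ⌈ν j / δ⌉)|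
        + |∑ j, F (ν j) - ∑ j, F (δ * ⌈ν j / δ⌉)| := by
        rw [abs_sub_comm (∑ j, F (ν j))]
        exact (abs_sub_le _ _ _).trans (add_le_add_left (abs_sub_le _ _ _) _)
    _ ≤ _ := by linarith

theorem HasCompactSupport.exists_abs_sum_sub_sum_le_of_card_lt {F : ℝ → ℝ}
    (hFs : HasCompactSupport F) (hFc : Continuous F) {ε : ℝ} (hε : 0 < ε) :
    ∃ c : ℝ, ∀ {ι : Type u} [Fintype ι] (μ ν : ι → ℝ) (r : ℕ),
      (∀ t, #{j | t < μ j} ≤ #{j | t < ν j} + r) →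
      (∀ t, #{j | t < ν j} ≤ #{j | t < μ j} + r) →
      |∑ j, F (μ j) - ∑ j, F (ν j)| ≤ ε * Fintype.card ι + c * r := by
  obtain ⟨δ, hδ, hFδ⟩ :=
    Metric.uniformContinuous_iff.mp (hFs.uniformContinuous_of_continuous hFc) (ε / 2) (half_pos hε)
  have hstep : ∀ y, |F y - F (δ * ⌈y / δ⌉)| ≤ ε / 2 := by
    intro y
    have h₁ : y ≤ δ * ⌈y / δ⌉ := (div_le_iff₀' hδ).mp (Int.le_ceil _)
    have h₂ : δ * ⌈y / δ⌉ < y + δ := by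
      have := mul_lt_mul_of_pos_left (Int.ceil_lt_add_one (y / δ)) hδ
      rwa [mul_add, mul_div_cancel₀ _ hδ.ne', mul_one] at this
    refine (hFδ (a := y) ?_).le
    rw [Real.dist_eq, abs_sub_lt_iff]
    constructor <;> linarith
  have hfin : {i : ℤ | F (δ * i) ≠ 0}.Finite := by
    have hmul : Tendsto (fun i : ℤ => δ * (i : ℝ)) cofinite (cocompact ℝ) :=
      Tendsto.comp (Homeomorph.mulLeft₀ δ hδ.ne').map_cocompact.le Int.tendsto_coe_cofinite
    exact hmul.eventually <| mem_of_superset hFs.isCompact.compl_mem_cocompact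
      fun x hx => image_eq_zero_of_notMem_tsupport hx
  refine ⟨2 * ∑ i ∈ hfin.toFinset, |F (δ * i)|, fun μ ν r hμν hνμ => ?_⟩
  have := abs_sum_sub_sum_le_of_card_lt μ ν r hμν hνμ F hδ hstep hfin.toFinset
    (fun i hi => by simpa using hi)
  linarith

end CountingFunction

theorem tendsto_inv_mul_sum_sub_sum_of_card_lt {d r : ℕ → ℕ} (μ ν : ∀ n, Fin (d n) → ℝ)
    (hμν : ∀ n t, #{j | t < μ n j} ≤ #{j | t < ν n j} + r n)
    (hνμ : ∀ n t, #{j | t < ν n j} ≤ #{j | t < μ n j} + r n)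
    (hr : Tendsto (fun n => (r n : ℝ) / d n) atTop (𝓝 0))
    {F : ℝ → ℝ} (hFs : HasCompactSupport F) (hFc : Continuous F) :
    Tendsto (fun n => 1 / (d n : ℝ) * (∑ j, F (μ n j) - ∑ j, F (ν n j))) atTop (𝓝 0) := by
  rw [Metric.tendsto_nhds]
  intro ε hε
  obtain ⟨c, hc⟩ := hFs.exists_abs_sum_sub_sum_le_of_card_lt hFc (half_pos hε)
  have hsmall : ∀ᶠ n in atTop, c * ((r n : ℝ) / d n) < ε / 2 := by
    have := hr.const_mul c
    rw [mul_zero] at this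
    exact this.eventually (gt_mem_nhds (half_pos hε))
  filter_upwards [hsmall] with n hn
  have hsum := hc (μ n) (ν n) (r n) (hμν n) (hνμ n)
  rw [Fintype.card_fin] at hsum
  rw [Real.dist_0_eq_abs, abs_mul, abs_of_nonneg (by positivity)]
  calc 1 / (d n : ℝ) * |∑ j, F (μ n j) - ∑ j, F (ν n j)|
      ≤ 1 / (d n : ℝ) * (ε / 2 * d n + c * r n) := mul_le_mul_of_nonneg_left hsum (by positivity)
    _ = ε / 2 * (d n / d n) + c * (r n / d n) := by ring
    _ ≤ ε / 2 * 1 + c * (r n / d n) := by gcongr; exact div_self_le_one _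
    _ < ε := by linarith

theorem eig_distribution_add_sparse_general (d : ℕ → ℕ)
    (A B : ∀ n, Matrix (Fin (d n)) (Fin (d n)) ℂ)
    (hA : ∀ n, (A n).IsHermitian) (hB : ∀ n, (B n).IsHermitian)
    (r : ℕ → ℕ)
    (hsparse : ∀ n, Set.ncard {j | (hA n).eigenvalues j ≠ 0} ≤ r n)
    (hr : Tendsto (fun n => (r n : ℝ) / (d n : ℝ)) atTop (nhds 0))
    {k : ℕ} (D : Set (Fin k → ℝ)) (f : (Fin k → ℝ) → ℝ)
    (hdist : EigDistributed B hB D f) :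
    EigDistributed (fun n => A n + B n) (fun n => (hA n).add (hB n)) D f := by
  intro F hFc hFs
  have hrank : ∀ n, (A n).rank ≤ r n := fun n =>
    (hA n).rank_eq_ncard_eigenvalues_ne_zero ▸ hsparse n
  have hAB : ∀ n t, #{j | t < ((hA n).add (hB n)).eigenvalues j}
      ≤ #{j | t < (hB n).eigenvalues j} + r n := fun n t => by
    have := ((hA n).add (hB n)).card_lt_eigenvalues_le_add_rank (hB n) t
    rw [add_sub_cancel_right] at this
    linarith [hrank n]
  have hBA : ∀ n t, #{j | t < (hB n).eigenvalues j}
      ≤ #{j | t < ((hA n).add (hB n)).eigenvalues j} + r n := fun n t => by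
    have := (hB n).card_lt_eigenvalues_le_add_rank ((hA n).add (hB n)) t
    rw [sub_add_cancel_right, rank_neg] at this
    linarith [hrank n]
  have hdiff := tendsto_inv_mul_sum_sub_sum_of_card_lt _ _ hAB hBA hr hFs hFc
  simpa only [zero_add, ← mul_add, sub_add_cancel] using hdiff.add (hdist F hFc hFs)

/-- Adding a sequence of Hermitian matrices with few, uniformly bounded, nonzero
eigenvalues does not change the eigenvalue distribution. -/
theorem eig_distribution_add_sparse (d : ℕ → ℕ) (hd : Tendsto d atTop atTop)
    (A B : ∀ n, Matrix (Fin (d n)) (Fin (d n)) ℂ)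
    (hA : ∀ n, (A n).IsHermitian) (hB : ∀ n, (B n).IsHermitian)
    (r : ℕ → ℕ)
    (hsparse : ∀ n, Set.ncard {j | (hA n).eigenvalues j ≠ 0} ≤ r n)
    (hr : Tendsto (fun n => (r n : ℝ) / (d n : ℝ)) atTop (nhds 0))
    (C : ℝ) (hC : ∀ n j, |(hA n).eigenvalues j| ≤ C)
    {k : ℕ} (D : Set (Fin k → ℝ)) (f : (Fin k → ℝ) → ℝ)
    (hdist : EigDistributed B hB D f) :
    EigDistributed (fun n => A n + B n) (fun n => (hA n).add (hB n)) D f :=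
  eig_distribution_add_sparse_general d A B hA hB r hsparse hr D f hdist
end
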